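/- An element z of the free associative algebra Afr_n lies in the free Lie subalgebra fr_n (generated by ω_1,…,ω_n under the commutator bracket) if and only if Δ(z) = z⊗1 + 1⊗z, where Δ is the coproduct determined by Δω_j = ω_j⊗1 + 1⊗ω_j (Friedrichs' criterion). -/

import Mathlib

/-!
The coproduct `Δ` is multiplicative and the generators are primitive, so the primitive elements
form a Lie subalgebra containing `fr_n`.

Conversely, let `θ(ω^u)` be the right-normed bracket `[u₁, [u₂, …, u_k]]`. A shuffle computation
shows `θ = m ∘ (N ⊗ S) ∘ Δ`, where `N` multiplies the degree-`k` part by `k` and `S` is the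
antipode `ω^γ ↦ (-1)^|γ| ω^(reverse γ)`. For primitive `z` this gives
`θ(z) = N(z) S(1) + N(1) S(z) = N(z)`, hence `z = Σ_α (z_α / |α|) θ(ω^α)`, a finite combination
of brackets (Dynkin–Specht–Wever).
-/

open scoped BigOperators ENNReal
open MeasureTheory

abbrev Word (n : ℕ) := List (Fin n)

abbrev Series (n : ℕ) := Word n → ℝ

namespace Series

variable {n : ℕ}

/-- Multiplication of formal noncommutative series: the coefficient at a word `α`
is the sum over all splittings `α = β ++ γ` of `x β * y γ`. -/
noncomputable def mul (x y : Series n) : Series n :=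
  fun α => ∑ k ∈ Finset.range (α.length + 1), x (α.take k) * y (α.drop k)

/-- The unit series `1`. -/
def one : Series n := fun α => if α = [] then 1 else 0

def add (x y : Series n) : Series n := fun α => x α + y α

def sub (x y : Series n) : Series n := fun α => x α - y α

def smul (c : ℝ) (x : Series n) : Series n := fun α => c * x α

def neg (x : Series n) : Series n := fun α => - x α

/-- The monomial `ω^α`. -/
def mono (α : Word n) : Series n := fun β => if β = α then 1 else 0

noncomputable def pow (x : Series n) : ℕ → Series n
  | 0 => one
  | m + 1 => mul (pow x m) x

/-- The norm `‖x‖_ξ = Σ_α ξ^{|α|} |c_α|`, valued in `[0,∞]`. -/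
noncomputable def xiNorm (ξ : ℝ) (x : Series n) : ℝ≥0∞ :=
  ∑' α : Word n, ENNReal.ofReal (ξ ^ α.length * |x α|)

/-- The rescaling map `M_ξ`, multiplying the degree-`j` component by `ξ^j`. -/
noncomputable def Mmap (ξ : ℝ) (x : Series n) : Series n :=
  fun α => ξ ^ α.length * x α

/-- Exponential of a series with zero constant term (each coefficient is a finite sum,
since `x^m` has zero coefficients in degrees `< m`). -/
noncomputable def expS (x : Series n) : Series n :=
  fun α => ∑ m ∈ Finset.range (α.length + 1), (pow x m) α / m.factorial

/-- Logarithm `ln(1+y)` for `y` with zero constant term (the `m = 0` term vanishes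
since division by `0` yields `0`). -/
noncomputable def lnS (y : Series n) : Series n :=
  fun α => ∑ m ∈ Finset.range (α.length + 1), (-1 : ℝ) ^ (m + 1) * (pow y m) α / m

/-- Inverse of a series `g` with constant term `1`, via the geometric series in `1 - g`. -/
noncomputable def invS (g : Series n) : Series n :=
  fun α => ∑ m ∈ Finset.range (α.length + 1), (pow (sub one g) m) α

/-- The canonical anti-automorphism `x ↦ x°`, with `ω_j° = -ω_j`, `(xy)° = y°x°`. -/
def circ (x : Series n) : Series n := fun α => (-1 : ℝ) ^ α.length * x α.reverse

/-- The degree-`j` homogeneous component. -/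
def trunc (j : ℕ) (x : Series n) : Series n := fun α => if α.length = j then x α else 0

/-- The completed tensor square: formal series in `ω^α ⊗ ω^β`. -/
abbrev Series2 (n : ℕ) := Word n × Word n → ℝ

noncomputable def mul2 (x y : Series2 n) : Series2 n :=
  fun p => ∑ k ∈ Finset.range (p.1.length + 1), ∑ l ∈ Finset.range (p.2.length + 1),
    x (p.1.take k, p.2.take l) * y (p.1.drop k, p.2.drop l)

def tens (x y : Series n) : Series2 n := fun p => x p.1 * y p.2

def add2 (x y : Series2 n) : Series2 n := fun p => x p + y p

def one2 : Series2 n := fun p => if p.1 = [] ∧ p.2 = [] then 1 else 0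

/-- `shc α β γ` is the number of ways the word `α` arises as a shuffle of `β` and `γ`,
i.e. the number of subsets `I` of positions of `α` with `α|I = β` and `α|∁I = γ`. -/
def shc : Word n → Word n → Word n → ℕ
  | [], β, γ => if β = [] ∧ γ = [] then 1 else 0
  | a :: α, β, γ =>
      (match β with
        | b :: β' => if b = a then shc α β' γ else 0
        | [] => 0) +
      (match γ with
        | c :: γ' => if c = a then shc α β γ' else 0
        | [] => 0)

/-- The coproduct `Δ`, the continuous algebra homomorphism with
`Δ ω_j = ω_j ⊗ 1 + 1 ⊗ ω_j`; its coefficient at `(β, γ)` is the sum of the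
coefficients of `x` over all shuffles of `β` and `γ`. -/
noncomputable def coprod (x : Series n) : Series2 n :=
  fun p => ∑ f : Fin (p.1.length + p.2.length) → Fin n,
    (shc (List.ofFn f) p.1 p.2 : ℝ) * x (List.ofFn f)

/-- Membership in the free Lie algebra `fr_n ⊂ Afr_n`: the smallest Lie subalgebra
(under `[a,b] = ab - ba`) containing the generators `ω_j`. -/
inductive InFr : Series n → Prop
  | zero : InFr (fun _ => 0)
  | gen (j : Fin n) : InFr (mono [j])
  | add {x y : Series n} : InFr x → InFr y → InFr (Series.add x y)
  | smul (c : ℝ) {x : Series n} : InFr x → InFr (Series.smul c x)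
  | bracket {x y : Series n} : InFr x → InFr y → InFr (sub (mul x y) (mul y x))

/-- The subword of `α` on a set `I` of positions. -/
def restr (α : Word n) (I : Finset (Fin α.length)) : Word n :=
  ((List.finRange α.length).filter (fun i => i ∈ I)).map (fun i => α.get i)

end Series

theorem Finset.sum_sum_comm_sum_sum {M α₁ α₂ α₃ α₄ : Type*} [AddCommMonoid M] (s : Finset α₁)
    (t : Finset α₂) (u : Finset α₃) (v : Finset α₄) (f : α₁ → α₂ → α₃ → α₄ → M) :
    ∑ a ∈ s, ∑ b ∈ t, ∑ c ∈ u, ∑ d ∈ v, f a b c d =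
      ∑ c ∈ u, ∑ d ∈ v, ∑ a ∈ s, ∑ b ∈ t, f a b c d := by
  simp_rw [← Finset.sum_product' (s := u), ← Finset.sum_product' (s := s)]
  exact Finset.sum_comm

namespace Series

variable {n : ℕ}

open Finset

section HeadCase

variable {R : Type*} [Zero R]

def headCase (a : Fin n) (f : Word n → R) : Word n → R
  | b :: β => if b = a then f β else 0
  | [] => 0

@[simp]
theorem headCase_nil (a : Fin n) (f : Word n → R) : headCase a f [] = 0 := rfl

@[simp]
theorem headCase_cons (a b : Fin n) (f : Word n → R) (β : Word n) :
    headCase a f (b :: β) = if b = a then f β else 0 := rfl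

end HeadCase

theorem shc_nil (β γ : Word n) : shc [] β γ = if β = [] ∧ γ = [] then 1 else 0 := rfl

theorem shc_cons (a : Fin n) (α β γ : Word n) :
    shc (a :: α) β γ = headCase a (shc α · γ) β + headCase a (shc α β ·) γ := by
  cases β <;> cases γ <;> rfl

theorem shc_eq_zero_of_length_ne {α β γ : Word n} (h : α.length ≠ β.length + γ.length) :
    shc α β γ = 0 := by
  induction α generalizing β γ with
  | nil =>
    rw [shc_nil, if_neg]
    rintro ⟨rfl, rfl⟩
    simp at h
  | cons a α ih =>
    have hβ : headCase a (shc α · γ) β = 0 := by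
      cases β with
      | nil => rfl
      | cons b β => simp [ih (show α.length ≠ β.length + γ.length by simp at h; omega)]
    have hγ : headCase a (shc α β ·) γ = 0 := by
      cases γ with
      | nil => rfl
      | cons c γ => simp [ih (show α.length ≠ β.length + γ.length by simp at h; omega)]
    rw [shc_cons, hβ, hγ]

theorem shc_append (α₁ α₂ β γ : Word n) :
    shc (α₁ ++ α₂) β γ = ∑ k ∈ range (β.length + 1), ∑ l ∈ range (γ.length + 1),
      shc α₁ (β.take k) (γ.take l) * shc α₂ (β.drop k) (γ.drop l) := by
  induction α₁ generalizing β γ with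
  | nil => cases β <;> cases γ <;> simp [sum_range_succ', shc_nil]
  | cons a α₁ ih =>
    have left : headCase a (shc (α₁ ++ α₂) · γ) β =
        ∑ k ∈ range (β.length + 1), ∑ l ∈ range (γ.length + 1),
          headCase a (shc α₁ · (γ.take l)) (β.take k) * shc α₂ (β.drop k) (γ.drop l) := by
      cases β with
      | nil => simp
      | cons b β =>
        rw [List.length_cons, sum_range_succ']
        by_cases hb : b = a <;> simp [hb, ih]
    have right : headCase a (shc (α₁ ++ α₂) β ·) γ =
        ∑ k ∈ range (β.length + 1), ∑ l ∈ range (γ.length + 1),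
          headCase a (shc α₁ (β.take k) ·) (γ.take l) * shc α₂ (β.drop k) (γ.drop l) := by
      rw [sum_comm]
      cases γ with
      | nil => simp
      | cons c γ =>
        rw [List.length_cons, sum_range_succ']
        by_cases hc : c = a
        · simp [hc, ih]
          exact sum_comm
        · simp [hc]
    simp only [List.cons_append, shc_cons, left, right, add_mul, sum_add_distrib]

def wordsOfLength (n m : ℕ) : Finset (Word n) :=
  univ.image (List.ofFn : (Fin m → Fin n) → Word n)

theorem mem_wordsOfLength {m : ℕ} {α : Word n} : α ∈ wordsOfLength n m ↔ α.length = m := by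
  simp only [wordsOfLength, mem_image, mem_univ, true_and]
  constructor
  · rintro ⟨f, rfl⟩
    exact List.length_ofFn
  · rintro rfl
    exact ⟨α.get, List.ofFn_get α⟩

theorem coprod_apply (x : Series n) (β γ : Word n) :
    coprod x (β, γ) = ∑ α ∈ wordsOfLength n (β.length + γ.length), (shc α β γ : ℝ) * x α := by
  rw [wordsOfLength, sum_image fun _ _ _ _ h => List.ofFn_injective h]
  rfl

theorem sum_wordsOfLength_shc_mul (x : Series n) (m : ℕ) (β γ : Word n) :
    ∑ α ∈ wordsOfLength n m, (shc α β γ : ℝ) * x α =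
      if m = β.length + γ.length then coprod x (β, γ) else 0 := by
  split_ifs with h
  · rw [coprod_apply, h]
  · refine sum_eq_zero fun α hα => ?_
    rw [shc_eq_zero_of_length_ne (by rwa [mem_wordsOfLength.mp hα]), Nat.cast_zero, zero_mul]

theorem sum_wordsOfLength_take_drop {M : Type*} [AddCommMonoid M] {j m : ℕ} (hj : j ≤ m)
    (F : Word n → Word n → M) :
    ∑ α ∈ wordsOfLength n m, F (α.take j) (α.drop j) =
      ∑ α₁ ∈ wordsOfLength n j, ∑ α₂ ∈ wordsOfLength n (m - j), F α₁ α₂ := by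
  rw [← sum_product']
  refine sum_nbij' (fun α => (α.take j, α.drop j)) (fun q => q.1 ++ q.2) ?_ ?_ ?_ ?_
    (fun _ _ => rfl)
  · intro α hα
    simp only [mem_product, mem_wordsOfLength, List.length_take, List.length_drop,
      mem_wordsOfLength.mp hα, and_true]
    omega
  · rintro ⟨α₁, α₂⟩ hq
    simp only [mem_product, mem_wordsOfLength] at hq ⊢
    simp only [List.length_append, hq]
    omega
  · intro α _
    exact List.take_append_drop j α
  · rintro ⟨α₁, α₂⟩ hq
    simp only [mem_product, mem_wordsOfLength] at hq
    simp [hq.1]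

theorem sum_wordsOfLength_shc_mul_take_drop (x y : Series n) (β γ : Word n) {j m : ℕ}
    (hj : j ≤ m) :
    ∑ α ∈ wordsOfLength n m, (shc α β γ : ℝ) * (x (α.take j) * y (α.drop j)) =
      ∑ k ∈ range (β.length + 1), ∑ l ∈ range (γ.length + 1),
        (∑ α₁ ∈ wordsOfLength n j, (shc α₁ (β.take k) (γ.take l) : ℝ) * x α₁) *
          ∑ α₂ ∈ wordsOfLength n (m - j), (shc α₂ (β.drop k) (γ.drop l) : ℝ) * y α₂ := by
  have hsplit := sum_wordsOfLength_take_drop hj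
    fun α₁ α₂ => (shc (α₁ ++ α₂) β γ : ℝ) * (x α₁ * y α₂)
  simp only [List.take_append_drop] at hsplit
  rw [hsplit]
  simp_rw [shc_append, Nat.cast_sum, Nat.cast_mul, sum_mul, mul_sum, mul_mul_mul_comm]
  rw [sum_sum_comm_sum_sum]

theorem coprod_mul (x y : Series n) : coprod (mul x y) = mul2 (coprod x) (coprod y) := by
  ext ⟨β, γ⟩
  set m := β.length + γ.length
  calc coprod (mul x y) (β, γ)
      = ∑ α ∈ wordsOfLength n m, (shc α β γ : ℝ) *
          ∑ j ∈ range (m + 1), x (α.take j) * y (α.drop j) := by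
        rw [coprod_apply]
        refine sum_congr rfl fun α hα => ?_
        rw [mul, mem_wordsOfLength.mp hα]
    _ = ∑ j ∈ range (m + 1), ∑ α ∈ wordsOfLength n m,
          (shc α β γ : ℝ) * (x (α.take j) * y (α.drop j)) := by
        simp_rw [mul_sum]
        exact sum_comm
    _ = ∑ j ∈ range (m + 1), ∑ k ∈ range (β.length + 1), ∑ l ∈ range (γ.length + 1),
          (∑ α₁ ∈ wordsOfLength n j, (shc α₁ (β.take k) (γ.take l) : ℝ) * x α₁) *
            ∑ α₂ ∈ wordsOfLength n (m - j), (shc α₂ (β.drop k) (γ.drop l) : ℝ) * y α₂ :=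
        sum_congr rfl fun j hj =>
          sum_wordsOfLength_shc_mul_take_drop x y β γ (Nat.lt_succ_iff.mp (mem_range.mp hj))
    _ = ∑ k ∈ range (β.length + 1), ∑ l ∈ range (γ.length + 1), ∑ j ∈ range (m + 1),
          (∑ α₁ ∈ wordsOfLength n j, (shc α₁ (β.take k) (γ.take l) : ℝ) * x α₁) *
            ∑ α₂ ∈ wordsOfLength n (m - j), (shc α₂ (β.drop k) (γ.drop l) : ℝ) * y α₂ := by
        rw [sum_comm]
        exact sum_congr rfl fun _ _ => sum_comm
    _ = mul2 (coprod x) (coprod y) (β, γ) := by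
        -- only `j = k + l` contributes
        refine sum_congr rfl fun k hk => sum_congr rfl fun l hl => ?_
        simp_rw [sum_wordsOfLength_shc_mul, ite_mul, zero_mul, sum_ite_eq']
        simp only [mem_range] at hk hl
        simp only [List.length_take, List.length_drop, mem_range]
        rw [if_pos (by omega), if_pos (by omega)]

theorem mul_one' (x : Series n) : mul x one = x := by
  funext α
  rw [mul, sum_eq_single_of_mem α.length (mem_range.mpr α.length.lt_succ_self)]
  · simp [one]
  · intro k hk hne
    have hlen : (α.drop k).length ≠ 0 := by
      rw [List.length_drop]
      have := mem_range.mp hk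
      omega
    simp [one, List.length_eq_zero_iff.not.mp hlen]

theorem one_mul' (x : Series n) : mul one x = x := by
  funext α
  rw [mul, sum_eq_single_of_mem 0 (mem_range.mpr α.length.succ_pos)]
  · simp [one]
  · intro k hk hne
    have hlen : (α.take k).length ≠ 0 := by
      rw [List.length_take]
      have := mem_range.mp hk
      omega
    simp [one, List.length_eq_zero_iff.not.mp hlen]

theorem mul2_add2_left (A B C : Series2 n) : mul2 (add2 A B) C = add2 (mul2 A C) (mul2 B C) := by
  funext p
  simp only [mul2, add2, add_mul, sum_add_distrib]

theorem mul2_add2_right (A B C : Series2 n) :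
    mul2 A (add2 B C) = add2 (mul2 A B) (mul2 A C) := by
  funext p
  simp only [mul2, add2, mul_add, sum_add_distrib]

theorem mul2_tens (a b c d : Series n) :
    mul2 (tens a b) (tens c d) = tens (mul a c) (mul b d) := by
  funext p
  simp only [mul2, tens, mul, sum_mul_sum]
  exact sum_congr rfl fun _ _ => sum_congr rfl fun _ _ => mul_mul_mul_comm _ _ _ _

theorem coprod_add (x y : Series n) (p : Word n × Word n) :
    coprod (Series.add x y) p = coprod x p + coprod y p := by
  simp only [coprod, Series.add, mul_add, sum_add_distrib]

theorem coprod_smul (c : ℝ) (x : Series n) (p : Word n × Word n) :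
    coprod (smul c x) p = c * coprod x p := by
  simp only [coprod, smul, mul_sum, mul_left_comm]

theorem coprod_sub (x y : Series n) (p : Word n × Word n) :
    coprod (sub x y) p = coprod x p - coprod y p := by
  simp only [coprod, sub, mul_sub, sum_sub_distrib]

def IsPrimitive (z : Series n) : Prop :=
  coprod z = add2 (tens z one) (tens one z)

theorem isPrimitive_zero : IsPrimitive (fun _ => 0 : Series n) := by
  funext p
  simp [coprod, add2, tens]

theorem isPrimitive_mono_singleton (j : Fin n) : IsPrimitive (mono [j]) := by
  funext ⟨β, γ⟩
  rw [coprod_apply]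
  simp only [mono, mul_ite, mul_one, mul_zero, sum_ite_eq', mem_wordsOfLength]
  rcases β with _ | ⟨b, _ | ⟨b', β⟩⟩ <;> rcases γ with _ | ⟨c, _ | ⟨c', γ⟩⟩ <;>
    simp [add2, tens, one, mono, shc_cons, shc_nil, eq_comm]

theorem IsPrimitive.add {x y : Series n} (hx : IsPrimitive x) (hy : IsPrimitive y) :
    IsPrimitive (Series.add x y) := by
  funext p
  rw [coprod_add, hx, hy]
  simp only [add2, tens, Series.add]
  ring

theorem IsPrimitive.smul (c : ℝ) {x : Series n} (hx : IsPrimitive x) :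
    IsPrimitive (Series.smul c x) := by
  funext p
  rw [coprod_smul, hx]
  simp only [add2, tens, Series.smul]
  ring

theorem IsPrimitive.commutator {x y : Series n} (hx : IsPrimitive x) (hy : IsPrimitive y) :
    IsPrimitive (sub (mul x y) (mul y x)) := by
  unfold IsPrimitive at hx hy ⊢
  funext p
  simp only [coprod_sub, coprod_mul, hx, hy, mul2_add2_left, mul2_add2_right, mul2_tens,
    mul_one', one_mul']
  simp only [add2, tens, sub]
  ring

theorem InFr.isPrimitive {z : Series n} (hz : InFr z) : IsPrimitive z := by
  induction hz with
  | zero => exact isPrimitive_zero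
  | gen j => exact isPrimitive_mono_singleton j
  | add _ _ hx hy => exact hx.add hy
  | smul c _ hx => exact hx.smul c
  | bracket _ _ hx hy => exact hx.commutator hy

theorem mono_mul_apply (c : Fin n) (x : Series n) (δ : Word n) :
    mul (mono [c]) x δ = headCase c x δ := by
  cases δ with
  | nil => simp [mul, mono]
  | cons d δ =>
    rw [mul, sum_eq_single_of_mem 1 (by simp)]
    · by_cases hd : d = c <;> simp [mono, hd]
    · intro k hk hk1
      rw [mono, if_neg, zero_mul]
      intro h
      have hlen := congrArg List.length h
      rw [mem_range, List.length_cons] at hk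
      simp only [List.length_take, List.length_cons, List.length_nil] at hlen
      omega

theorem mul_mono_apply (c : Fin n) (x : Series n) (δ : Word n) :
    mul x (mono [c]) δ = if δ.getLast? = some c then x δ.dropLast else 0 := by
  rcases List.eq_nil_or_concat δ with rfl | ⟨δ, d, rfl⟩
  · simp [mul, mono]
  rw [List.concat_eq_append, mul, sum_eq_single_of_mem δ.length (by simp)]
  · by_cases hd : d = c <;> simp [mono, hd]
  · intro k hk hkne
    rw [mono, if_neg, mul_zero]
    intro h
    have hlen := congrArg List.length h
    rw [mem_range, List.length_append, List.length_singleton] at hk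
    simp only [List.length_drop, List.length_append, List.length_cons, List.length_nil] at hlen
    omega

/-- The coefficient of `ω^δ` in `Σ G(|β|) ω^β ω^(reverse γ)`, summed over the terms `ω^β ⊗ ω^γ`
of `Δ(ω^u)`. -/
noncomputable def revShuffleSum (G : ℕ → ℝ) (u δ : Word n) : ℝ :=
  ∑ k ∈ range (δ.length + 1), G k * shc u (δ.take k) (δ.drop k).reverse

theorem revShuffleSum_nil_left (G : ℕ → ℝ) (δ : Word n) :
    revShuffleSum G [] δ = if δ = [] then G 0 else 0 := by
  cases δ with
  | nil => simp [revShuffleSum, shc_nil]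
  | cons d δ =>
    simp only [revShuffleSum, shc_nil, List.take_eq_nil_iff, List.reverse_eq_nil_iff,
      List.drop_eq_nil_iff, List.length_cons]
    exact sum_eq_zero fun k _ => by rw [if_neg (by simp; omega), Nat.cast_zero, mul_zero]

theorem revShuffleSum_neg (G : ℕ → ℝ) (u δ : Word n) :
    revShuffleSum (fun k => -G k) u δ = -revShuffleSum G u δ := by
  simp only [revShuffleSum, neg_mul, sum_neg_distrib]

theorem revShuffleSum_sub (G H : ℕ → ℝ) (u δ : Word n) :
    revShuffleSum (fun k => G k - H k) u δ = revShuffleSum G u δ - revShuffleSum H u δ := by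
  simp only [revShuffleSum, sub_mul, sum_sub_distrib]

theorem revShuffleSum_cons (G : ℕ → ℝ) (c : Fin n) (u δ : Word n) :
    revShuffleSum G (c :: u) δ =
      headCase c (revShuffleSum (fun k => G (k + 1)) u) δ +
        if δ.getLast? = some c then revShuffleSum G u δ.dropLast else 0 := by
  have left : ∑ k ∈ range (δ.length + 1),
      G k * (headCase c (shc u · (δ.drop k).reverse) (δ.take k) : ℕ) =
        headCase c (revShuffleSum (fun k => G (k + 1)) u) δ := by
    cases δ with
    | nil => simp
    | cons d δ =>
      rw [List.length_cons, sum_range_succ']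
      by_cases hd : d = c <;> simp [hd, revShuffleSum]
  have right : ∑ k ∈ range (δ.length + 1),
      G k * (headCase c (shc u (δ.take k) ·) (δ.drop k).reverse : ℕ) =
        if δ.getLast? = some c then revShuffleSum G u δ.dropLast else 0 := by
    rcases List.eq_nil_or_concat δ with rfl | ⟨δ, d, rfl⟩
    · simp
    rw [List.concat_eq_append, List.length_append, List.length_singleton, sum_range_succ]
    have hsplit : ∀ k ∈ range (δ.length + 1), (δ ++ [d]).take k = δ.take k ∧
        ((δ ++ [d]).drop k).reverse = d :: (δ.drop k).reverse := fun k hk => by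
      have hkδ := Nat.lt_succ_iff.mp (mem_range.mp hk)
      simp [List.take_append_of_le_length hkδ, List.drop_append_of_le_length hkδ]
    rw [sum_congr rfl fun k hk => by rw [(hsplit k hk).1, (hsplit k hk).2]]
    by_cases hd : d = c <;> simp [hd, revShuffleSum]
  rw [revShuffleSum, ← left, ← right, ← sum_add_distrib]
  refine sum_congr rfl fun k _ => ?_
  rw [shc_cons, Nat.cast_add, mul_add]

/-- The antipode identity `m ∘ (id ⊗ S) ∘ Δ = ε`. -/
theorem revShuffleSum_neg_one_pow (u δ : Word n) :
    revShuffleSum (fun k => (-1) ^ k) u δ = if u = [] ∧ δ = [] then 1 else 0 := by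
  induction u generalizing δ with
  | nil => simp [revShuffleSum_nil_left]
  | cons c u ih =>
    have shift : revShuffleSum (fun k => (-1 : ℝ) ^ (k + 1)) u =
        fun t => -revShuffleSum (fun k => (-1) ^ k) u t := funext fun t => by
      simp only [← revShuffleSum_neg, pow_succ, mul_neg_one]
    simp only [revShuffleSum_cons, shift, ih]
    by_cases hu : u = []
    · cases δ with
      | nil => simp [hu]
      | cons d δ => by_cases hd : d = c <;> cases δ <;> simp [hu, hd]
    · cases δ <;> simp [hu]

noncomputable def rightBracket : Word n → Series n
  | [] => fun _ => 0
  | [c] => mono [c]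
  | c :: d :: u =>
      sub (mul (mono [c]) (rightBracket (d :: u))) (mul (rightBracket (d :: u)) (mono [c]))

theorem inFr_rightBracket : ∀ u : Word n, InFr (rightBracket u)
  | [] => InFr.zero
  | [c] => InFr.gen c
  | _ :: d :: u => InFr.bracket (InFr.gen _) (inFr_rightBracket (d :: u))

/-- The last term accounts for `rightBracket [c] = ω_c` although `rightBracket [] = 0`. -/
theorem rightBracket_cons_apply (c : Fin n) (u δ : Word n) :
    rightBracket (c :: u) δ =
      headCase c (rightBracket u) δ -
        (if δ.getLast? = some c then rightBracket u δ.dropLast else 0) +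
          if u = [] ∧ δ = [c] then 1 else 0 := by
  cases u with
  | nil => cases δ <;> simp [rightBracket, mono]
  | cons d u => simp [rightBracket, sub, mono_mul_apply, mul_mono_apply]

theorem revShuffleSum_mul_neg_one_pow (u δ : Word n) :
    revShuffleSum (fun k => k * (-1) ^ k) u δ = (-1) ^ δ.length * rightBracket u δ := by
  induction u generalizing δ with
  | nil => cases δ <;> simp [revShuffleSum_nil_left, rightBracket]
  | cons c u ih =>
    have shift : revShuffleSum (fun k => ((k + 1 : ℕ) : ℝ) * (-1) ^ (k + 1)) u =
        fun t => -((-1) ^ t.length * rightBracket u t) - if u = [] ∧ t = [] then 1 else 0 := by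
      funext t
      rw [← ih, ← revShuffleSum_neg_one_pow, ← revShuffleSum_neg, ← revShuffleSum_sub]
      congr 1
      funext k
      push_cast
      ring
    rw [revShuffleSum_cons, rightBracket_cons_apply]
    simp only [shift, ih]
    cases δ with
    | nil => simp
    | cons d δ =>
      simp only [headCase_cons, List.length_cons, List.length_dropLast, pow_succ,
        List.cons_eq_cons, add_tsub_cancel_right]
      split_ifs <;> simp_all <;> ring

theorem revShuffleSum_eq_zero_of_length_ne (G : ℕ → ℝ) {u δ : Word n}
    (h : δ.length ≠ u.length) : revShuffleSum G u δ = 0 :=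
  sum_eq_zero fun k hk => by
    have hkδ := mem_range.mp hk
    rw [shc_eq_zero_of_length_ne (by simp; omega), Nat.cast_zero, mul_zero]

theorem rightBracket_apply_eq_zero_of_length_ne {u δ : Word n} (h : δ.length ≠ u.length) :
    rightBracket u δ = 0 := by
  have hkey := revShuffleSum_mul_neg_one_pow u δ
  rw [revShuffleSum_eq_zero_of_length_ne _ h] at hkey
  exact (mul_eq_zero.mp hkey.symm).resolve_left (pow_ne_zero _ (by norm_num))

theorem IsPrimitive.coprod_apply_eq {z : Series n} (hz : IsPrimitive z) (β γ : Word n) :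
    coprod z (β, γ) = z β * one γ + one β * z γ :=
  congrFun hz (β, γ)

theorem IsPrimitive.apply_nil {z : Series n} (hz : IsPrimitive z) : z [] = 0 := by
  simpa [coprod, one, shc_nil] using hz.coprod_apply_eq [] []

theorem IsPrimitive.length_mul_eq_sum_rightBracket {z : Series n} (hz : IsPrimitive z)
    (δ : Word n) :
    δ.length * z δ = ∑ α ∈ wordsOfLength n δ.length, z α * rightBracket α δ := by
  -- `T` is `(-1)^|δ|` times the coefficient of `ω^δ` in `m ∘ (N ⊗ S) ∘ Δ` applied to `z`.
  set T := ∑ k ∈ range (δ.length + 1),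
    k * (-1) ^ k * coprod z (δ.take k, (δ.drop k).reverse) with hT
  have via_primitive : T = (-1) ^ δ.length * (δ.length * z δ) := by
    rw [hT, sum_eq_single_of_mem δ.length (self_mem_range_succ _)]
    · simp only [List.take_length, List.drop_length, List.reverse_nil, hz.coprod_apply_eq, one,
        ↓reduceIte, mul_one, hz.apply_nil, mul_zero, add_zero]
      ring
    · intro k hk hkδ
      have hkδ' := Nat.lt_of_le_of_ne (Nat.lt_succ_iff.mp (mem_range.mp hk)) hkδ
      have hdrop : (δ.drop k).reverse ≠ [] := by simp; omega
      rcases Nat.eq_zero_or_pos k with rfl | hk0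
      · simp
      have htake : δ.take k ≠ [] := by
        rw [Ne, List.take_eq_nil_iff]
        rintro (rfl | rfl)
        · exact hk0.false
        · exact Nat.not_lt_zero _ hkδ'
      simp [hz.coprod_apply_eq, one, hdrop, htake]
  have via_coprod :
      T = (-1) ^ δ.length * ∑ α ∈ wordsOfLength n δ.length, z α * rightBracket α δ := by
    calc T = ∑ k ∈ range (δ.length + 1), ∑ α ∈ wordsOfLength n δ.length,
          k * (-1) ^ k * (shc α (δ.take k) (δ.drop k).reverse * z α) := by
          refine sum_congr rfl fun k hk => ?_
          have hkδ := mem_range.mp hk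
          rw [coprod_apply, mul_sum]
          congr 2
          simp
          omega
      _ = ∑ α ∈ wordsOfLength n δ.length, z α * revShuffleSum (fun k => k * (-1) ^ k) α δ := by
          rw [sum_comm]
          refine sum_congr rfl fun α _ => ?_
          rw [revShuffleSum, mul_sum]
          exact sum_congr rfl fun k _ => by ring
      _ = _ := by
          simp_rw [revShuffleSum_mul_neg_one_pow, mul_sum]
          exact sum_congr rfl fun α _ => by ring
  exact mul_left_cancel₀ (pow_ne_zero _ (by norm_num)) (via_primitive.symm.trans via_coprod)

theorem IsPrimitive.eq_sum_rightBracket {z : Series n} (hz : IsPrimitive z) {s : Finset (Word n)}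
    (hs : ∀ α, z α ≠ 0 → α ∈ s) :
    z = fun δ => ∑ α ∈ s, z α / α.length * rightBracket α δ := by
  funext δ
  have hdeg : ∀ α, z α / α.length * rightBracket α δ = z α * rightBracket α δ / δ.length := by
    intro α
    by_cases h : δ.length = α.length
    · rw [h]
      ring
    · simp [rightBracket_apply_eq_zero_of_length_ne h]
  have hsupp : ∑ α ∈ s, z α * rightBracket α δ =
      ∑ α ∈ wordsOfLength n δ.length, z α * rightBracket α δ := by
    calc ∑ α ∈ s, z α * rightBracket α δ
        = ∑ α ∈ s ∩ wordsOfLength n δ.length, z α * rightBracket α δ := by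
          refine (sum_subset inter_subset_left fun α hα hα' => ?_).symm
          have hlen : δ.length ≠ α.length := fun h =>
            hα' (mem_inter.mpr ⟨hα, mem_wordsOfLength.mpr h.symm⟩)
          rw [rightBracket_apply_eq_zero_of_length_ne hlen, mul_zero]
      _ = ∑ α ∈ wordsOfLength n δ.length, z α * rightBracket α δ := by
          refine sum_subset inter_subset_right fun α hα hα' => ?_
          have hzα : z α = 0 := by_contra fun h => hα' (mem_inter.mpr ⟨hs α h, hα⟩)
          rw [hzα, zero_mul]
  simp_rw [hdeg, ← sum_div, hsupp, ← hz.length_mul_eq_sum_rightBracket]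
  rcases eq_or_ne δ [] with rfl | hδ
  · simp [hz.apply_nil]
  · field_simp [List.length_eq_zero_iff.not.mpr hδ]

theorem InFr.sum {ι : Type*} (s : Finset ι) (g : ι → Series n) (h : ∀ i ∈ s, InFr (g i)) :
    InFr fun δ => ∑ i ∈ s, g i δ := by
  classical
  induction s using Finset.induction_on with
  | empty => simpa using InFr.zero
  | insert a s ha ih =>
    have hinsert : (fun δ => ∑ i ∈ insert a s, g i δ) = Series.add (g a) fun δ => ∑ i ∈ s, g i δ :=
      funext fun δ => sum_insert ha
    rw [hinsert]
    exact (h a (mem_insert_self a s)).add (ih fun i hi => h i (mem_insert_of_mem hi))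

end Series

open Series

/-- Friedrichs' criterion: a polynomial `z ∈ Afr_n` (finitely supported
series) lies in the free Lie subalgebra `fr_n` if and only if
`Δ(z) = z ⊗ 1 + 1 ⊗ z`. -/
theorem friedrichs_criterion {n : ℕ} (z : Series n)
    (hfin : Set.Finite {α : Word n | z α ≠ 0}) :
    InFr z ↔ coprod z = add2 (tens z one) (tens one z) := by
  refine ⟨fun h => h.isPrimitive, fun hz => ?_⟩
  rw [IsPrimitive.eq_sum_rightBracket hz fun α hα => hfin.mem_toFinset.mpr hα]
  exact InFr.sum _ _ fun α _ => InFr.smul _ (inFr_rightBracket α)
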